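/- In the field ℚ(t,q) of rational functions in two indeterminates t and q, for every integer k ≥ 0: T_k(t,q) = Σ_{j=0}^{k} Σ_{i=0}^{j} (−1)^{j+i} · t^{2i} · q^{j^2 + i^2 + i} · [k−j choose i]_{q^2} · ( [k−i choose j−i]_{q^2} + t · [k−i−1 choose j−i−1]_{q^2} ). -/

import Mathlib

/-- The polynomials `T_k(t,q)` defined by `T_0 = 1` and, for `k ≥ 1`,
`T_k = T_{k-1} + (1+t)(-q)^{k²} + (1-t²) ∑_{i=1}^{k-1} (-q)^{k²-i²} T_{i-1}`
(below the sum is reindexed by `i ↦ i+1`). -/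
def T {R : Type*} [CommRing R] (t q : R) : ℕ → R
  | 0 => 1
  | (k+1) => T t q k + (1 + t) * (-q) ^ ((k+1)^2) +
      (1 - t^2) * ∑ i ∈ (Finset.range k).attach,
        (-q) ^ ((k+1)^2 - (i.1+1)^2) * T t q i.1
decreasing_by
  · exact Nat.lt_succ_self k
  · exact Nat.lt_succ_of_lt (Finset.mem_range.mp i.2)

/-- `f n h` with `f 0 0 = 1`, `f 0 h = 0` for `h ≥ 1`, `f n h = 0` for `h < 0`, and
`f n h = (1-q^h) f (n-1) (h-1) + (1-t q^{h+1}) f (n-1) (h+1)`; at `h = 0` the first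
term vanishes since `1 - q^0 = 0`. -/
def f {R : Type*} [CommRing R] (t q : R) : ℕ → ℕ → R
  | 0, h => if h = 0 then 1 else 0
  | (n+1), 0 => (1 - t * q) * f t q n 1
  | (n+1), (h+1) => (1 - q^(h+1)) * f t q n h + (1 - t * q^(h+2)) * f t q n (h+2)

/-- `Ẽ_n(t,q) = f(2n,0)`, which is `(1-q)^{2n}` times the `(t,q)`-Euler number. -/
def Etilde {R : Type*} [CommRing R] (t q : R) (n : ℕ) : R := f t q (2*n) 0

/-- Binomial coefficient with integer lower index, `0` when the lower index is negative. -/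
def binom (n : ℕ) (m : ℤ) : ℤ := if 0 ≤ m then (n.choose m.toNat : ℤ) else 0

/-- q-Pochhammer symbol `(a;q)_n = ∏_{j=0}^{n-1} (1 - a q^j)`. -/
def qPoch {K : Type*} [CommRing K] (a q : K) (n : ℕ) : K :=
  ∏ j ∈ Finset.range n, (1 - a * q ^ j)

/-- Gaussian binomial coefficient `[n choose k]_q = (q;q)_n / ((q;q)_k (q;q)_{n-k})`,
equal to `0` whenever `k < 0` or `k > n`. -/
def gauss {K : Type*} [Field K] (q : K) (n k : ℤ) : K :=
  if 0 ≤ k ∧ k ≤ n then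
    qPoch q q n.toNat / (qPoch q q k.toNat * qPoch q q (n - k).toNat)
  else 0

/-- Number of distinct (positive) part sizes of the partition encoded by an
antitone function `Fin m → Fin (n+1)`. -/
def distCard {m n : ℕ} (g : Fin m → Fin (n+1)) : ℕ :=
  ((Finset.univ.image fun i => ((g i : ℕ))).erase 0).card

/-- `∑_{λ ⊆ B(m,n)} x^{dist(λ)} q^{|λ|}`: partitions in the `m × n` box are encoded
as antitone functions `Fin m → Fin (n+1)`. -/
def boxSum {R : Type*} [CommRing R] (x q : R) (m n : ℕ) : R :=
  ∑ g ∈ Finset.univ.filter (fun g : Fin m → Fin (n+1) => ∀ i j : Fin m, i ≤ j → g j ≤ g i),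
    x ^ distCard g * q ^ (∑ i, (g i : ℕ))

/-- The field `ℚ(t,q)` of rational functions in two indeterminates. -/
abbrev Ktq : Type := FractionRing (MvPolynomial (Fin 2) ℚ)

/-- The indeterminate `t` in `ℚ(t,q)`. -/
noncomputable def tV : Ktq := algebraMap (MvPolynomial (Fin 2) ℚ) Ktq (MvPolynomial.X 0)

/-- The indeterminate `q` in `ℚ(t,q)`. -/
noncomputable def qV : Ktq := algebraMap (MvPolynomial (Fin 2) ℚ) Ktq (MvPolynomial.X 1)


/-!
Both sides satisfy `X (k+2) = (1 - q^(2k+3)) X (k+1) + t² q^(2k+3) X k` with `X 0 = 1` and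
`X 1 = 1 - q(1+t)`. For `T`, subtracting `(-q)^(2k+3)` times the defining relation of `T (k+1)`
from that of `T (k+2)` cancels the sums. For the double sum, the `q`-Pascal rule applied to the
three Gaussian binomials of a summand splits it into three pieces. Viewing the summands as
a finitely supported function on `ℤ × ℤ`, these pieces are, up to the shifts
`(j, i) ↦ (j-1, i)` and `(j, i) ↦ (j-1, i-1)`, the summands for `k+1`, `-q^(2k+3)` times
those for `k+1`, and `t² q^(2k+3)` times those for `k`.
-/

open Finset Function

section Recurrence

variable {R : Type*} [CommRing R] (t q : R)

lemma T_succ (k : ℕ) :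
    T t q (k + 1) = T t q k + (1 + t) * (-q) ^ ((k + 1) ^ 2) +
      (1 - t ^ 2) * ∑ i ∈ range k, (-q) ^ ((k + 1) ^ 2 - (i + 1) ^ 2) * T t q i := by
  rw [T, sum_attach (range k) fun i => (-q) ^ ((k + 1) ^ 2 - (i + 1) ^ 2) * T t q i]

lemma T_one : T t q 1 = 1 - q * (1 + t) := by
  simp [T_succ, T, sub_eq_add_neg, mul_comm]

theorem T_add_two (k : ℕ) :
    T t q (k + 2) = (1 - q ^ (2 * k + 3)) * T t q (k + 1) + t ^ 2 * q ^ (2 * k + 3) * T t q k := by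
  have hsq (i : ℕ) (hi : i ≤ k + 1) :
      (k + 2) ^ 2 - i ^ 2 = (2 * k + 3) + ((k + 1) ^ 2 - i ^ 2) := by
    have := Nat.pow_le_pow_left hi 2
    zify [this, this.trans (Nat.pow_le_pow_left (Nat.le_succ _) 2)]
    ring
  have hsum : ∑ i ∈ range (k + 1), (-q) ^ ((k + 2) ^ 2 - (i + 1) ^ 2) * T t q i
      = (-q) ^ (2 * k + 3) * (∑ i ∈ range k, (-q) ^ ((k + 1) ^ 2 - (i + 1) ^ 2) * T t q i
        + T t q k) := by
    rw [sum_range_succ, mul_add, mul_sum, hsq (k + 1) le_rfl, Nat.sub_self, add_zero]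
    congr 1
    exact sum_congr rfl fun i hi => by
      rw [hsq (i + 1) (by simp at hi; omega), pow_add, mul_assoc]
  have hodd : (-q) ^ (2 * k + 3) = -q ^ (2 * k + 3) := Odd.neg_pow ⟨k + 1, by ring⟩ q
  rw [T_succ t q (k + 1), show k + 1 + 1 = k + 2 by rfl, hsum,
    show (k + 2) ^ 2 = 2 * k + 3 + (k + 1) ^ 2 by ring, pow_add, hodd, T_succ t q k]
  ring

end Recurrence

section GaussianBinomial

variable {K : Type*} [Field K] {Q : K}

lemma qPoch_zero {R : Type*} [CommRing R] (a q : R) : qPoch a q 0 = 1 :=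
  prod_range_zero _

lemma qPoch_succ {R : Type*} [CommRing R] (a q : R) (n : ℕ) :
    qPoch a q (n + 1) = qPoch a q n * (1 - a * q ^ n) :=
  prod_range_succ _ _

lemma one_sub_mul_pow_ne_zero (hQ : ¬IsOfFinOrder Q) (n : ℕ) : 1 - Q * Q ^ n ≠ 0 := by
  rw [sub_ne_zero, ← pow_succ', ne_comm]
  exact fun h => hQ (isOfFinOrder_iff_pow_eq_one.mpr ⟨n + 1, n.succ_pos, h⟩)

lemma qPoch_ne_zero (hQ : ¬IsOfFinOrder Q) (n : ℕ) : qPoch Q Q n ≠ 0 :=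
  prod_ne_zero_iff.mpr fun j _ => one_sub_mul_pow_ne_zero hQ j

lemma gauss_of_neg {n k : ℤ} (hk : k < 0) : gauss Q n k = 0 :=
  if_neg fun h => by omega

lemma gauss_of_lt {n k : ℤ} (h : n < k) : gauss Q n k = 0 :=
  if_neg fun h => by omega

lemma gauss_natCast {a b : ℕ} (h : b ≤ a) :
    gauss Q a b = qPoch Q Q a / (qPoch Q Q b * qPoch Q Q (a - b)) := by
  rw [gauss, if_pos ⟨b.cast_nonneg, Nat.cast_le.mpr h⟩, ← Nat.cast_sub h]
  simp only [Int.toNat_natCast]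

lemma gauss_zero_right (hQ : ¬IsOfFinOrder Q) {n : ℤ} (hn : 0 ≤ n) : gauss Q n 0 = 1 := by
  rw [gauss, if_pos ⟨le_rfl, hn⟩, sub_zero, Int.toNat_zero, qPoch_zero, one_mul,
    div_self (qPoch_ne_zero hQ _)]

lemma gauss_self (hQ : ¬IsOfFinOrder Q) {n : ℤ} (hn : 0 ≤ n) : gauss Q n n = 1 := by
  rw [gauss, if_pos ⟨hn, le_rfl⟩, sub_self, Int.toNat_zero, qPoch_zero, mul_one,
    div_self (qPoch_ne_zero hQ _)]

lemma gauss_pascal_natCast (hQ : ¬IsOfFinOrder Q) (a b : ℕ) :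
    gauss Q (a + b + 2 : ℕ) (a + 1 : ℕ)
      = gauss Q (a + b + 1 : ℕ) (a + 1 : ℕ) + Q ^ (b + 1) * gauss Q (a + b + 1 : ℕ) a := by
  rw [gauss_natCast (by omega), gauss_natCast (by omega), gauss_natCast (by omega),
    show a + b + 2 - (a + 1) = b + 1 by omega, show a + b + 1 - (a + 1) = b by omega,
    show a + b + 1 - a = b + 1 by omega, qPoch_succ _ _ (a + b + 1), qPoch_succ _ _ a,
    qPoch_succ _ _ b]
  field_simp [qPoch_ne_zero hQ, one_sub_mul_pow_ne_zero hQ]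
  ring

/-- The `q`-Pascal rule; it fails only at `n = k = 0`, where the right-hand side is `0`. -/
theorem gauss_pascal (hQ : ¬IsOfFinOrder Q) {n k : ℤ} (h : n ≠ 0 ∨ k ≠ 0) :
    gauss Q n k = gauss Q (n - 1) k + Q ^ (n - k) * gauss Q (n - 1) (k - 1) := by
  rcases lt_or_ge k 0 with hk | hk
  · rw [gauss_of_neg hk, gauss_of_neg hk, gauss_of_neg (by omega), mul_zero, add_zero]
  rcases lt_or_ge n k with hnk | hkn
  · rw [gauss_of_lt hnk, gauss_of_lt (by omega), gauss_of_lt (by omega), mul_zero, add_zero]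
  rcases hk.eq_or_lt with rfl | hk
  · rw [gauss_zero_right hQ hkn, gauss_zero_right hQ (by omega), gauss_of_neg (by omega),
      mul_zero, add_zero]
  rcases hkn.eq_or_lt with rfl | hkn
  · rw [gauss_self hQ (by omega), gauss_of_lt (by omega), sub_self, gauss_self hQ (by omega),
      zpow_zero, one_mul, zero_add]
  obtain ⟨a, rfl⟩ : ∃ a : ℕ, k = a + 1 := ⟨(k - 1).toNat, by omega⟩
  obtain ⟨b, rfl⟩ : ∃ b : ℕ, n = a + b + 2 := ⟨(n - a - 2).toNat, by omega⟩
  have := gauss_pascal_natCast hQ a b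
  push_cast at this
  rw [this, show (a + b + 2 : ℤ) - (a + 1) = (b + 1 : ℕ) by push_cast; ring, zpow_natCast]
  ring_nf

end GaussianBinomial

section DoubleSum

variable {K : Type*} [Field K] {Q t q : K}

/-- The Gaussian-binomial factor of the summand, with `Q = q²` and `m = k`. -/
def gaussTerm (Q t : K) (m j i : ℤ) : K :=
  gauss Q (m - j) i * (gauss Q (m - i) (j - i) + t * gauss Q (m - i - 1) (j - i - 1))

lemma gaussTerm_eq_zero {m j i : ℤ} (h : ¬(0 ≤ i ∧ i ≤ j ∧ j ≤ m)) :
    gaussTerm Q t m j i = 0 := by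
  unfold gaussTerm
  by_cases hi : 0 ≤ i
  · by_cases hij : i ≤ j
    · rw [gauss_of_lt (by omega), zero_mul]
    · rw [gauss_of_neg (n := m - i) (by omega), gauss_of_neg (n := m - i - 1) (by omega), mul_zero,
        zero_add, mul_zero]
  · rw [gauss_of_neg (by omega), zero_mul]

theorem gaussTerm_rec (hQ : ¬IsOfFinOrder Q) {m : ℤ} (hm : 2 ≤ m) (j i : ℤ) :
    gaussTerm Q t m j i = gaussTerm Q t (m - 1) j i + Q ^ (m - j) * gaussTerm Q t (m - 1) (j - 1) i
      + Q ^ (m - j - i) * gaussTerm Q t (m - 2) (j - 1) (i - 1) := by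
  by_cases hj : j = m
  · subst hj
    rw [gaussTerm_eq_zero (m := j - 1) (by omega), gaussTerm_eq_zero (m := j - 2) (by omega),
      sub_self, zpow_zero, one_mul, mul_zero, zero_add, add_zero]
    unfold gaussTerm
    rcases eq_or_ne i 0 with rfl | hi
    · simp only [sub_zero, sub_self, show j - 1 - 1 = j - 2 by ring,
        gauss_self hQ (by omega : (0 : ℤ) ≤ j), gauss_self hQ (by omega : (0 : ℤ) ≤ j - 1),
        gauss_self hQ (by omega : (0 : ℤ) ≤ j - 2)]
    · have : gauss Q (j - j) i = 0 := by
        rcases hi.lt_or_gt with hi | hi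
        exacts [gauss_of_neg hi, gauss_of_lt (by omega)]
      rw [this, show j - 1 - (j - 1) = j - j by ring, this, zero_mul, zero_mul]
  have p1 := gauss_pascal hQ (n := m - j) (k := i) (by omega)
  have p2 := gauss_pascal hQ (n := m - i) (k := j - i) (by omega)
  have p3 := gauss_pascal hQ (n := m - i - 1) (k := j - i - 1) (by omega)
  unfold gaussTerm
  linear_combination (norm := ring_nf)
    gauss Q (m - j) i * (p2 + t * p3)
      + (gauss Q (m - 1 - i) (j - i) + t * gauss Q (m - 1 - i - 1) (j - i - 1)) * p1

/-- The sign and monomial of the summand, extended to integer indices so that the index shifts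
become bijections of `ℤ × ℤ`. -/
def weight (t q : K) (j i : ℤ) : K := (-1) ^ (j + i) * t ^ (2 * i) * q ^ (j ^ 2 + i ^ 2 + i)

lemma weight_eq_neg_mul (hq : q ≠ 0) (j i : ℤ) :
    weight t q j i = -q ^ (2 * j - 1) * weight t q (j - 1) i := by
  unfold weight
  rw [show j + i = j - 1 + i + 1 by ring, zpow_add₀ (neg_ne_zero.mpr one_ne_zero),
    show j ^ 2 + i ^ 2 + i = (j - 1) ^ 2 + i ^ 2 + i + (2 * j - 1) by ring, zpow_add₀ hq]
  ring

lemma weight_eq_mul (ht : t ≠ 0) (hq : q ≠ 0) (j i : ℤ) :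
    weight t q j i = t ^ 2 * q ^ (2 * j + 2 * i - 1) * weight t q (j - 1) (i - 1) := by
  unfold weight
  rw [show j + i = j - 1 + (i - 1) + 2 by ring, zpow_add₀ (neg_ne_zero.mpr one_ne_zero),
    show j ^ 2 + i ^ 2 + i = (j - 1) ^ 2 + (i - 1) ^ 2 + (i - 1) + (2 * j + 2 * i - 1) by ring,
    zpow_add₀ hq, show 2 * i = 2 * (i - 1) + 2 by ring, zpow_add₀ ht]
  norm_num
  ring

def weightedTerm (t q : K) (m : ℤ) (p : ℤ × ℤ) : K :=
  weight t q p.1 p.2 * gaussTerm (q ^ 2) t m p.1 p.2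

lemma bounds_of_mem_support_weightedTerm {m : ℤ} {p : ℤ × ℤ}
    (hp : p ∈ support (weightedTerm t q m)) : 0 ≤ p.2 ∧ p.2 ≤ p.1 ∧ p.1 ≤ m := by
  by_contra h
  exact hp (mul_eq_zero_of_right _ (gaussTerm_eq_zero h))

lemma hasFiniteSupport_weightedTerm (m : ℤ) : (weightedTerm t q m).HasFiniteSupport := by
  refine (Set.finite_Icc (0 : ℤ × ℤ) (m, m)).subset fun p hp => ?_
  obtain ⟨hi, hij, hjm⟩ := bounds_of_mem_support_weightedTerm hp
  exact ⟨⟨by simp only [Prod.fst_zero]; omega, hi⟩, ⟨hjm, by omega⟩⟩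

theorem weightedTerm_rec (ht : t ≠ 0) (hq : q ≠ 0) (hQ : ¬IsOfFinOrder (q ^ 2)) {m : ℤ}
    (hm : 2 ≤ m) (p : ℤ × ℤ) :
    weightedTerm t q m p = weightedTerm t q (m - 1) p
      - q ^ (2 * m - 1) * weightedTerm t q (m - 1) (p - (1, 0))
      + t ^ 2 * q ^ (2 * m - 1) * weightedTerm t q (m - 2) (p - (1, 1)) := by
  obtain ⟨j, i⟩ := p
  have hpow : ∀ a b : ℤ, (q ^ 2) ^ a * q ^ b = q ^ (2 * a + b) := fun a b => by
    rw [← zpow_natCast, ← zpow_mul, ← zpow_add₀ hq]; norm_num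
  simp only [weightedTerm, Prod.mk_sub_mk, sub_zero]
  rw [gaussTerm_rec hQ hm]
  linear_combination (norm := ring_nf)
    (q ^ 2) ^ (m - j) * gaussTerm (q ^ 2) t (m - 1) (j - 1) i * weight_eq_neg_mul hq j i
      - gaussTerm (q ^ 2) t (m - 1) (j - 1) i * weight t q (j - 1) i * hpow (m - j) (2 * j - 1)
      + (q ^ 2) ^ (m - j - i) * gaussTerm (q ^ 2) t (m - 2) (j - 1) (i - 1)
        * weight_eq_mul ht hq j i
      + t ^ 2 * weight t q (j - 1) (i - 1) * gaussTerm (q ^ 2) t (m - 2) (j - 1) (i - 1)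
        * hpow (m - j - i) (2 * j + 2 * i - 1)

def doubleGaussSum (t q : K) (k : ℕ) : K :=
  ∑ j ∈ range (k + 1), ∑ i ∈ range (j + 1),
    (-1 : K) ^ (j + i) * t ^ (2 * i) * q ^ (j ^ 2 + i ^ 2 + i) * gauss (q ^ 2) (k - j) i *
      (gauss (q ^ 2) (k - i) (j - i) + t * gauss (q ^ 2) (k - i - 1) (j - i - 1))

lemma doubleGaussSum_eq_finsum (k : ℕ) :
    doubleGaussSum t q k = ∑ᶠ p, weightedTerm t q k p := by
  let e : ℕ × ℕ ↪ ℤ × ℤ := Nat.castEmbedding.prodMap Nat.castEmbedding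
  rw [finsum_eq_sum_of_support_subset (s := (range (k + 1) ×ˢ range (k + 1)).map e) _ ?_,
    sum_map, sum_product]
  · refine sum_congr rfl fun j hj => ?_
    rw [← sum_subset (range_subset_range.mpr (mem_range.mp hj))]
    · refine sum_congr rfl fun i _ => ?_
      simp only [e, Embedding.coe_prodMap, Prod.map, Nat.castEmbedding_apply, weightedTerm, weight,
        gaussTerm, mul_assoc]
      norm_cast
    · intro i _ hi
      simp only [mem_range] at hi
      exact mul_eq_zero_of_right _ (gaussTerm_eq_zero (by simp [e]; omega))
  · intro p hp
    obtain ⟨hi, hij, hjk⟩ := bounds_of_mem_support_weightedTerm hp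
    simp only [coe_map, coe_product, coe_range, Set.mem_image, Set.mem_prod, Set.mem_Iio]
    exact ⟨(p.1.toNat, p.2.toNat), ⟨by omega, by omega⟩, by ext <;> simp [e] <;> omega⟩

theorem doubleGaussSum_rec (ht : t ≠ 0) (hq : q ≠ 0) (hQ : ¬IsOfFinOrder (q ^ 2)) (k : ℕ) :
    doubleGaussSum t q (k + 2) = (1 - q ^ (2 * k + 3)) * doubleGaussSum t q (k + 1)
      + t ^ 2 * q ^ (2 * k + 3) * doubleGaussSum t q k := by
  have hfin (c : K) (m : ℤ) (v : ℤ × ℤ) :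
      HasFiniteSupport fun p => c * weightedTerm t q m (p - v) :=
    ((hasFiniteSupport_weightedTerm m).fun_comp_of_injective sub_left_injective).fun_mul_right _
  have hshift (m : ℤ) (v : ℤ × ℤ) :
      ∑ᶠ p, weightedTerm t q m (p - v) = ∑ᶠ p, weightedTerm t q m p :=
    finsum_comp_equiv (Equiv.subRight v)
  have hrec := weightedTerm_rec ht hq hQ (m := k + 2) (by omega)
  simp only [show (k : ℤ) + 2 - 1 = (k + 1 : ℕ) by push_cast; ring,
    show (k : ℤ) + 2 - 2 = k by ring,
    show 2 * ((k : ℤ) + 2) - 1 = (2 * k + 3 : ℕ) by push_cast; ring, zpow_natCast] at hrec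
  simp only [doubleGaussSum_eq_finsum]
  rw [show ((k + 2 : ℕ) : ℤ) = k + 2 by push_cast; ring, finsum_congr hrec,
    finsum_add_distrib (f := fun p => weightedTerm t q _ p - _ * weightedTerm t q _ (p - _))
      ((hasFiniteSupport_weightedTerm _).sub (hfin _ _ _)) (hfin _ _ _),
    finsum_sub_distrib (hasFiniteSupport_weightedTerm _) (hfin _ _ _),
    ← mul_finsum, ← mul_finsum, hshift, hshift]
  ring

lemma doubleGaussSum_zero : doubleGaussSum t q 0 = 1 := by
  simp [doubleGaussSum, gauss, qPoch_zero]

lemma doubleGaussSum_one (hQ : ¬IsOfFinOrder (q ^ 2)) :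
    doubleGaussSum t q 1 = 1 - q * (1 + t) := by
  simp [doubleGaussSum, sum_range_succ, gauss_of_neg, gauss_zero_right hQ, gauss_self hQ,
    gauss_of_lt, sub_eq_add_neg]

end DoubleSum


theorem T_eq_doubleGaussSum {K : Type*} [Field K] {t q : K} (ht : t ≠ 0) (hq : q ≠ 0)
    (hQ : ¬IsOfFinOrder (q ^ 2)) (k : ℕ) : T t q k = doubleGaussSum t q k := by
  induction k using Nat.twoStepInduction with
  | zero => rw [T, doubleGaussSum_zero]
  | one => rw [T_one, doubleGaussSum_one hQ]
  | more k ih₀ ih₁ => rw [T_add_two, doubleGaussSum_rec ht hq hQ, ih₀, ih₁]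

lemma algebraMap_X_ne_zero (i : Fin 2) :
    algebraMap (MvPolynomial (Fin 2) ℚ) Ktq (MvPolynomial.X i) ≠ 0 :=
  (map_ne_zero_iff _ (IsFractionRing.injective _ _)).mpr (MvPolynomial.X_ne_zero i)

lemma not_isOfFinOrder_qV_sq : ¬IsOfFinOrder (qV ^ 2) := by
  intro h
  have hX : IsOfFinOrder (MvPolynomial.X 1 : MvPolynomial (Fin 2) ℚ) :=
    (IsFractionRing.injective (MvPolynomial (Fin 2) ℚ) Ktq).isOfFinOrder_iff
      (f := (algebraMap _ Ktq).toMonoidHom) |>.mp (h.of_pow two_ne_zero)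
  obtain ⟨n, hn, hXn⟩ := isOfFinOrder_iff_pow_eq_one.mp hX
  have := congrArg MvPolynomial.totalDegree hXn
  rw [MvPolynomial.totalDegree_X_pow, MvPolynomial.totalDegree_one] at this
  omega

theorem stmt_1 (k : ℕ) :
    T tV qV k = ∑ j ∈ Finset.range (k+1), ∑ i ∈ Finset.range (j+1),
      (-1 : Ktq)^(j+i) * tV^(2*i) * qV^(j^2+i^2+i) *
        gauss (qV^2) ((k:ℤ) - j) (i:ℤ) *
        (gauss (qV^2) ((k:ℤ) - i) ((j:ℤ) - i)
          + tV * gauss (qV^2) ((k:ℤ) - i - 1) ((j:ℤ) - i - 1)) :=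
  T_eq_doubleGaussSum (algebraMap_X_ne_zero 0) (algebraMap_X_ne_zero 1) not_isOfFinOrder_qV_sq k
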